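/- arXiv:2411.07697 — 3 statements merged into one kernel-verified Lean document; each statement's English description precedes it below -/
import Mathlib

section
/- If A is a simple m-rowed (0,1)-matrix avoiding the configuration consisting of two copies of each column of [1_3, 1_2 0_1] (i.e., the 3×4 matrix with columns (1,1,1),(1,1,1),(1,1,0),(1,1,0)), and A has at least forb(m, 1_4) − 1 columns, then every column of A has at most 3 ones; that is, A is a configuration in [K_m^3 K_m^2 K_m^1 K_m^0], the matrix of all m-rowed columns of column sum at most 3. -/
/-- A (0,1)-matrix (entries as `Bool`) is simple if it has no repeated columns. -/
def Simple {α β : Type*} (A : α → β → Bool) : Prop :=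
  Function.Injective fun j i => A i j

/-- `F` is a configuration in `A`: some submatrix of `A` is a row and column
permutation of `F`. -/
def IsConfig {α β γ δ : Type*} (F : α → β → Bool) (A : γ → δ → Bool) : Prop :=
  ∃ (r : α ↪ γ) (c : β ↪ δ), ∀ i j, F i j = A (r i) (c j)

/-- `2·[1₃ 1₂0₁]`: the 3×4 configuration with columns (1,1,1),(1,1,1),(1,1,0),(1,1,0). -/
def twoCfg : Fin 3 → Fin 4 → Bool :=
  ![![true, true, true, true], ![true, true, true, true], ![true, true, false, false]]

open Finset

variable {α : Type*} [DecidableEq α]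

/-- Set-family version of avoiding `twoCfg`. -/
def AvoidCfg (T : Finset (Finset α)) : Prop :=
  ∀ a b c : α, a ≠ b → a ≠ c → b ≠ c →
    ∀ S1 S2 S3 S4 : Finset α, S1 ∈ T → S2 ∈ T → S3 ∈ T → S4 ∈ T →
      S1 ≠ S2 → S3 ≠ S4 →
      a ∈ S1 → b ∈ S1 → c ∈ S1 → a ∈ S2 → b ∈ S2 → c ∈ S2 →
      a ∈ S3 → b ∈ S3 → c ∉ S3 → a ∈ S4 → b ∈ S4 → c ∉ S4 → False

/-- A family of distinct subsets of `U` with pairwise intersections of size ≤ 1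
has at most `1 + |U| + C(|U|,2)` members. -/
lemma linear_family_bound (U : Finset α) (P : Finset (Finset α))
    (hU : ∀ S ∈ P, S ⊆ U)
    (hlin : ∀ S ∈ P, ∀ S' ∈ P, S ≠ S' → (S ∩ S').card ≤ 1) :
    P.card ≤ 1 + U.card + U.card.choose 2 := by
  classical
  set Ps := P.filter (fun S => S.card ≤ 1) with hPs
  set Pb := P.filter (fun S => ¬ S.card ≤ 1) with hPb
  have hsplit : Ps.card + Pb.card = P.card :=
    Finset.card_filter_add_card_filter_not _
  have hsmall : Ps.card ≤ 1 + U.card := by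
    have hsub : Ps ⊆ insert (∅ : Finset α) (U.image (fun x => ({x} : Finset α))) := by
      intro S hS
      rw [hPs, mem_filter] at hS
      obtain ⟨hSP, hc⟩ := hS
      interval_cases h : S.card
      · simp [Finset.card_eq_zero.mp h]
      · obtain ⟨x, hx⟩ := Finset.card_eq_one.mp h
        have hxU : x ∈ U := hU S hSP (by simp [hx])
        exact mem_insert_of_mem (mem_image.mpr ⟨x, hxU, hx.symm⟩)
    calc Ps.card ≤ _ := card_le_card hsub
      _ ≤ (U.image (fun x => ({x} : Finset α))).card + 1 := card_insert_le _ _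
      _ ≤ U.card + 1 := by
          exact Nat.add_le_add_right (card_image_le) 1
      _ = 1 + U.card := by omega
  have hbig : Pb.card ≤ U.card.choose 2 := by
    set f : Finset α → Finset α :=
      fun S => if h : 2 ≤ S.card then (Finset.exists_subset_card_eq h).choose else ∅ with hf
    have hfspec : ∀ S : Finset α, 2 ≤ S.card → f S ⊆ S ∧ (f S).card = 2 := by
      intro S h
      rw [hf]
      simp only [dif_pos h]
      obtain ⟨h1, h2⟩ := (Finset.exists_subset_card_eq h).choose_spec
      exact ⟨h1, h2⟩
    have hmem : ∀ S ∈ Pb, 2 ≤ S.card := by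
      intro S hS; rw [hPb, mem_filter] at hS; omega
    have hmaps : ∀ S ∈ Pb, f S ∈ U.powersetCard 2 := by
      intro S hS
      obtain ⟨h1, h2⟩ := hfspec S (hmem S hS)
      rw [mem_powersetCard]
      exact ⟨h1.trans (hU S (mem_filter.mp hS).1), h2⟩
    have hinj : ∀ S ∈ Pb, ∀ S' ∈ Pb, f S = f S' → S = S' := by
      intro S hS S' hS' hff
      by_contra hne
      obtain ⟨h1, h2⟩ := hfspec S (hmem S hS)
      obtain ⟨h1', h2'⟩ := hfspec S' (hmem S' hS')
      have : f S ⊆ S ∩ S' := subset_inter h1 (hff ▸ h1')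
      have := card_le_card this
      have := hlin S (mem_filter.mp hS).1 S' (mem_filter.mp hS').1 hne
      omega
    calc Pb.card ≤ (U.powersetCard 2).card := card_le_card_of_injOn f hmaps hinj
      _ = U.card.choose 2 := card_powersetCard 2 U
  omega
lemma base4 (V : Finset α) (T : Finset (Finset α)) (hV4 : V.card = 4)
    (hV : ∀ S ∈ T, S ⊆ V) (hA : AvoidCfg T) (hbig : ∃ S ∈ T, 4 ≤ S.card) :
    T.card + 2 ≤ 15 := by
  classical
  by_contra hcon
  push_neg at hcon
  obtain ⟨S0, hS0T, hS0c⟩ := hbig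
  have hS0V : S0 = V := eq_of_subset_of_card_le (hV S0 hS0T) (by omega)
  have hVT : V ∈ T := hS0V ▸ hS0T
  have hTsub : T ⊆ V.powerset := fun S hS => mem_powerset.mpr (hV S hS)
  set M := V.powerset \ T with hM
  have hMcard : M.card ≤ 2 := by
    have h1 : M.card = V.powerset.card - T.card := card_sdiff_of_subset hTsub
    have h2 : V.powerset.card = 16 := by rw [card_powerset, hV4]; norm_num
    omega
  have hcover : ∀ Q ∈ V.powersetCard 2, ∃ W ∈ M, Q ⊆ W := by
    intro Q hQ
    rw [mem_powersetCard] at hQ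
    obtain ⟨hQV, hQ2⟩ := hQ
    have hsd : (V \ Q).card = 2 := by rw [card_sdiff_of_subset hQV]; omega
    obtain ⟨c, d, hcd, hVQ⟩ := Finset.card_eq_two.mp hsd
    have hcV : c ∈ V \ Q := by rw [hVQ]; simp
    have hdV : d ∈ V \ Q := by rw [hVQ]; simp
    rw [mem_sdiff] at hcV hdV
    by_cases h1 : Q ∈ T
    · by_cases h2 : insert c Q ∈ T
      · by_cases h3 : insert d Q ∈ T
        · exfalso
          obtain ⟨a, b, hab, hQab⟩ := Finset.card_eq_two.mp hQ2
          have haQ : a ∈ Q := by rw [hQab]; simp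
          have hbQ : b ∈ Q := by rw [hQab]; simp
          have hac : a ≠ c := fun h => hcV.2 (h ▸ haQ)
          have hbc : b ≠ c := fun h => hcV.2 (h ▸ hbQ)
          have hne12 : V ≠ insert c Q := by
            intro h
            have := card_insert_le c Q
            rw [← h, hV4] at this
            omega
          have hne34 : Q ≠ insert d Q := by
            intro h
            exact hdV.2 (h ▸ mem_insert_self d Q)
          exact hA a b c hab hac hbc V (insert c Q) Q (insert d Q) hVT h2 h1 h3
            hne12 hne34 (hQV haQ) (hQV hbQ) hcV.1
            (mem_insert_of_mem haQ) (mem_insert_of_mem hbQ) (mem_insert_self c Q)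
            haQ hbQ hcV.2
            (mem_insert_of_mem haQ) (mem_insert_of_mem hbQ)
            (by simp [mem_insert, hcd, hcV.2])
        · exact ⟨insert d Q, mem_sdiff.mpr
            ⟨mem_powerset.mpr (insert_subset hdV.1 hQV), h3⟩, subset_insert _ _⟩
      · exact ⟨insert c Q, mem_sdiff.mpr
          ⟨mem_powerset.mpr (insert_subset hcV.1 hQV), h2⟩, subset_insert _ _⟩
    · exact ⟨Q, mem_sdiff.mpr ⟨mem_powerset.mpr hQV, h1⟩, Subset.refl _⟩
  have hWcard : ∀ W ∈ M, W.card ≤ 3 := by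
    intro W hW
    rw [hM, mem_sdiff, mem_powerset] at hW
    have hne : W ≠ V := fun h => hW.2 (h ▸ hVT)
    have := card_lt_card (Finset.ssubset_iff_subset_ne.mpr ⟨hW.1, hne⟩)
    omega
  have hp6 : (V.powersetCard 2).card = 6 := by
    rw [card_powersetCard, hV4]; decide
  have hMc : M.card = 0 ∨ M.card = 1 ∨ M.card = 2 := by omega
  have hch : ∀ k ≤ 3, k.choose 2 ≤ 3 := by decide
  have hch3 : ∀ k ≤ 3, 3 ≤ k.choose 2 → k = 3 := by decide
  rcases hMc with h0 | h1 | h2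
  · rw [Finset.card_eq_zero] at h0
    have : 0 < (V.powersetCard 2).card := by omega
    obtain ⟨Q, hQ⟩ := Finset.card_pos.mp this
    obtain ⟨W, hW, _⟩ := hcover Q hQ
    simp [h0] at hW
  · obtain ⟨W, hWe⟩ := Finset.card_eq_one.mp h1
    have hsub : V.powersetCard 2 ⊆ W.powersetCard 2 := by
      intro Q hQ
      obtain ⟨W', hW', hQW⟩ := hcover Q hQ
      rw [hWe, mem_singleton] at hW'
      subst hW'
      exact mem_powersetCard.mpr ⟨hQW, (mem_powersetCard.mp hQ).2⟩
    have := card_le_card hsub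
    rw [hp6, card_powersetCard] at this
    have hWM : W ∈ M := by rw [hWe]; exact mem_singleton_self W
    have := hch W.card (hWcard W hWM)
    omega
  · obtain ⟨W1, W2, hW12, hMe⟩ := Finset.card_eq_two.mp h2
    have h1M : W1 ∈ M := by rw [hMe]; simp
    have h2M : W2 ∈ M := by rw [hMe]; simp
    have hc1 : W1.card ≤ 3 := hWcard W1 h1M
    have hc2 : W2.card ≤ 3 := hWcard W2 h2M
    have hsub : V.powersetCard 2 ⊆ W1.powersetCard 2 ∪ W2.powersetCard 2 := by
      intro Q hQ
      obtain ⟨W, hW, hQW⟩ := hcover Q hQ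
      rw [hMe] at hW
      rcases mem_insert.mp hW with h | h
      · exact mem_union_left _ (mem_powersetCard.mpr ⟨h ▸ hQW, (mem_powersetCard.mp hQ).2⟩)
      · rw [mem_singleton] at h
        exact mem_union_right _ (mem_powersetCard.mpr ⟨h ▸ hQW, (mem_powersetCard.mp hQ).2⟩)
    have h6 : 6 ≤ (W1.powersetCard 2 ∪ W2.powersetCard 2).card := by
      rw [← hp6]; exact card_le_card hsub
    have hpc := card_union_add_card_inter (W1.powersetCard 2) (W2.powersetCard 2)
    rw [card_powersetCard, card_powersetCard] at hpc
    have hb1 := hch W1.card hc1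
    have hb2 := hch W2.card hc2
    have h13 : W1.card = 3 := hch3 W1.card hc1 (by omega)
    have h23 : W2.card = 3 := hch3 W2.card hc2 (by omega)
    have hUV : W1 ∪ W2 ⊆ V := by
      apply union_subset
      · exact mem_powerset.mp (mem_sdiff.mp h1M).1
      · exact mem_powerset.mp (mem_sdiff.mp h2M).1
    have hUc : (W1 ∪ W2).card ≤ 4 := hV4 ▸ card_le_card hUV
    have hint : 2 ≤ (W1 ∩ W2).card := by
      have := card_union_add_card_inter W1 W2
      omega
    obtain ⟨Q, hQsub, hQ2⟩ := Finset.exists_subset_card_eq hint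
    have hQmem : Q ∈ W1.powersetCard 2 ∩ W2.powersetCard 2 := by
      refine mem_inter.mpr ⟨mem_powersetCard.mpr ⟨?_, hQ2⟩, mem_powersetCard.mpr ⟨?_, hQ2⟩⟩
      · exact hQsub.trans inter_subset_left
      · exact hQsub.trans inter_subset_right
    have : 1 ≤ (W1.powersetCard 2 ∩ W2.powersetCard 2).card :=
      Finset.card_pos.mpr ⟨Q, hQmem⟩
    omega
lemma key_bound : ∀ (v : ℕ) (V : Finset α) (T : Finset (Finset α)), V.card = v →
    (∀ S ∈ T, S ⊆ V) → AvoidCfg T → (∃ S ∈ T, 4 ≤ S.card) →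
    T.card + 2 ≤ v.choose 3 + v.choose 2 + v + 1 := by
  intro v
  induction v using Nat.strong_induction_on with
  | _ v ih =>
  intro V T hVc hV hA hbig
  obtain ⟨S0, hS0T, hS0c⟩ := hbig
  have hS0V := hV S0 hS0T
  have h4v : 4 ≤ v := by
    have := card_le_card hS0V
    omega
  rcases eq_or_lt_of_le h4v with h4 | h5
  · -- base case v = 4
    have := base4 V T (by omega) hV hA ⟨S0, hS0T, hS0c⟩
    rw [← h4]
    have h15 : (4:ℕ).choose 3 + (4:ℕ).choose 2 + 4 + 1 = 15 := by decide
    omega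
  · -- inductive step, v ≥ 5
    have hrex : ∃ r ∈ V, 4 ≤ (S0.erase r).card := by
      by_cases h : 5 ≤ S0.card
      · have hVne : V.Nonempty := by rw [← card_pos, hVc]; omega
        obtain ⟨r, hr⟩ := hVne
        refine ⟨r, hr, ?_⟩
        by_cases hrS : r ∈ S0
        · rw [card_erase_of_mem hrS]; omega
        · rw [erase_eq_of_notMem hrS]; omega
      · have : (V \ S0).Nonempty := by
          rw [← card_pos, card_sdiff_of_subset hS0V]
          have := card_le_card hS0V
          omega
        obtain ⟨r, hr⟩ := this
        rw [mem_sdiff] at hr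
        exact ⟨r, hr.1, by rw [erase_eq_of_notMem hr.2]; omega⟩
    obtain ⟨r, hrV, hrS0⟩ := hrex
    set V' := V.erase r with hV'def
    set T' := T.image (fun S => S.erase r) with hT'
    set P := T.filter (fun S => r ∉ S ∧ insert r S ∈ T) with hP
    set T1 := T.filter (fun S => r ∈ S) with hT1
    set T0 := T.filter (fun S => ¬ r ∈ S) with hT0
    -- cardinality identity
    have hsplit : T1.card + T0.card = T.card :=
      card_filter_add_card_filter_not (fun S => r ∈ S)
    have hT'eq : T' = T0 ∪ T1.image (fun S => S.erase r) := by
      ext S'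
      simp only [hT', hT0, hT1, mem_image, mem_union, mem_filter]
      constructor
      · rintro ⟨S, hS, rfl⟩
        by_cases h : r ∈ S
        · right; exact ⟨S, ⟨hS, h⟩, rfl⟩
        · left; rw [erase_eq_of_notMem h]; exact ⟨hS, h⟩
      · rintro (⟨hS, hr⟩ | ⟨S, ⟨hS, hrS⟩, rfl⟩)
        · exact ⟨S', hS, erase_eq_of_notMem hr⟩
        · exact ⟨S, hS, rfl⟩
    have hE : (T1.image (fun S => S.erase r)).card = T1.card := by
      apply card_image_of_injOn
      intro S hS S' hS' h
      simp only [hT1, coe_filter, Set.mem_setOf_eq] at hS hS'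
      have h' : S.erase r = S'.erase r := h
      rw [← insert_erase hS.2, ← insert_erase hS'.2, h']
    have hI : T0 ∩ T1.image (fun S => S.erase r) = P := by
      ext S
      simp only [hT0, hT1, hP, mem_inter, mem_filter, mem_image]
      constructor
      · rintro ⟨⟨hS, hr⟩, S1, ⟨hS1T, hrS1⟩, hS1e⟩
        refine ⟨hS, hr, ?_⟩
        have : insert r S = S1 := by rw [← hS1e, insert_erase hrS1]
        rw [this]; exact hS1T
      · rintro ⟨hS, hr, hins⟩
        exact ⟨⟨hS, hr⟩, insert r S, ⟨hins, mem_insert_self r S⟩, erase_insert hr⟩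
    have hcardid : T'.card + P.card = T.card := by
      have h := card_union_add_card_inter T0 (T1.image (fun S => S.erase r))
      rw [hI, hE, ← hT'eq] at h
      omega
    -- properties of T'
    have hV'sub : ∀ S' ∈ T', S' ⊆ V' := by
      intro S' hS'
      obtain ⟨S, hS, rfl⟩ := mem_image.mp hS'
      exact erase_subset_erase r (hV S hS)
    have hA' : AvoidCfg T' := by
      intro a b c hab hac hbc S1' S2' S3' S4' m1 m2 m3 m4 h12 h34
        ha1 hb1 hc1 ha2 hb2 hc2 ha3 hb3 hc3 ha4 hb4 hc4
      obtain ⟨S1, hS1, rfl⟩ := mem_image.mp m1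
      obtain ⟨S2, hS2, rfl⟩ := mem_image.mp m2
      obtain ⟨S3, hS3, rfl⟩ := mem_image.mp m3
      obtain ⟨S4, hS4, rfl⟩ := mem_image.mp m4
      have hcr : c ≠ r := ne_of_mem_erase hc1
      exact hA a b c hab hac hbc S1 S2 S3 S4 hS1 hS2 hS3 hS4
        (fun h => h12 (h ▸ rfl)) (fun h => h34 (h ▸ rfl))
        (mem_of_mem_erase ha1) (mem_of_mem_erase hb1) (mem_of_mem_erase hc1)
        (mem_of_mem_erase ha2) (mem_of_mem_erase hb2) (mem_of_mem_erase hc2)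
        (mem_of_mem_erase ha3) (mem_of_mem_erase hb3)
        (fun h => hc3 (mem_erase.mpr ⟨hcr, h⟩))
        (mem_of_mem_erase ha4) (mem_of_mem_erase hb4)
        (fun h => hc4 (mem_erase.mpr ⟨hcr, h⟩))
    have hbig' : ∃ S' ∈ T', 4 ≤ S'.card :=
      ⟨S0.erase r, mem_image_of_mem _ hS0T, hrS0⟩
    have hV'c : V'.card = v - 1 := by rw [hV'def, card_erase_of_mem hrV, hVc]
    have ih' := ih (v - 1) (by omega) V' T' hV'c hV'sub hA' hbig'
    -- bound on P
    have hPsub : ∀ S ∈ P, S ⊆ V' := by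
      intro S hS
      rw [hP, mem_filter] at hS
      exact subset_erase.mpr ⟨hV S hS.1, hS.2.1⟩
    have hPlin : ∀ S ∈ P, ∀ S' ∈ P, S ≠ S' → (S ∩ S').card ≤ 1 := by
      intro S hS S' hS' hne
      by_contra hcard
      push_neg at hcard
      obtain ⟨Q, hQsub, hQ2⟩ := Finset.exists_subset_card_eq hcard
      obtain ⟨a, b, hab, rfl⟩ := Finset.card_eq_two.mp hQ2
      have haS : a ∈ S ∩ S' := hQsub (by simp)
      have hbS : b ∈ S ∩ S' := hQsub (by simp)
      rw [mem_inter] at haS hbS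
      rw [hP, mem_filter] at hS hS'
      obtain ⟨hST, hrS, hiS⟩ := hS
      obtain ⟨hST', hrS', hiS'⟩ := hS'
      have har : a ≠ r := fun h => hrS (h ▸ haS.1)
      have hbr : b ≠ r := fun h => hrS (h ▸ hbS.1)
      have hins_ne : insert r S ≠ insert r S' := by
        intro h
        apply hne
        rw [← erase_insert hrS, ← erase_insert hrS', h]
      exact hA a b r hab har hbr (insert r S) (insert r S') S S' hiS hiS' hST hST'
        hins_ne hne
        (mem_insert_of_mem haS.1) (mem_insert_of_mem hbS.1) (mem_insert_self r S)
        (mem_insert_of_mem haS.2) (mem_insert_of_mem hbS.2) (mem_insert_self r S')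
        haS.1 hbS.1 hrS haS.2 hbS.2 hrS'
    have hPb := linear_family_bound V' P hPsub hPlin
    rw [hV'c] at hPb
    -- arithmetic
    obtain ⟨w, rfl⟩ : ∃ w, v = w + 1 := ⟨v - 1, by omega⟩
    have hw : w + 1 - 1 = w := by omega
    rw [hw] at ih' hPb
    have e3 : (w + 1).choose 3 = w.choose 2 + w.choose 3 := Nat.choose_succ_succ w 2
    have e2 : (w + 1).choose 2 = w.choose 1 + w.choose 2 := Nat.choose_succ_succ w 1
    have e1 : w.choose 1 = w := Nat.choose_one_right w
    omega
lemma inj3 {β : Type*} {a b c : β} (hab : a ≠ b) (hac : a ≠ c) (hbc : b ≠ c) :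
    Function.Injective ![a, b, c] := by
  intro x y h
  fin_cases x <;> fin_cases y <;> simp_all

lemma inj4 {β : Type*} {a b c d : β} (hab : a ≠ b) (hac : a ≠ c) (had : a ≠ d)
    (hbc : b ≠ c) (hbd : b ≠ d) (hcd : c ≠ d) : Function.Injective ![a, b, c, d] := by
  intro x y h
  fin_cases x <;> fin_cases y <;> simp_all

lemma avoid_of_matrix {m n : ℕ} (A : Fin m → Fin n → Bool)
    (hav : ¬ IsConfig twoCfg A) :
    AvoidCfg ((univ : Finset (Fin n)).image
      (fun j => univ.filter (fun i => A i j = true))) := by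
  intro a b c hab hac hbc S1 S2 S3 S4 m1 m2 m3 m4 h12 h34
    ha1 hb1 hc1 ha2 hb2 hc2 ha3 hb3 hc3 ha4 hb4 hc4
  obtain ⟨j1, -, rfl⟩ := mem_image.mp m1
  obtain ⟨j2, -, rfl⟩ := mem_image.mp m2
  obtain ⟨j3, -, rfl⟩ := mem_image.mp m3
  obtain ⟨j4, -, rfl⟩ := mem_image.mp m4
  simp only [mem_filter, mem_univ, true_and] at ha1 hb1 hc1 ha2 hb2 hc2 ha3 hb3 hc3 ha4 hb4 hc4
  have hc3' : A c j3 = false := by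
    cases h : A c j3
    · rfl
    · exact absurd h hc3
  have hc4' : A c j4 = false := by
    cases h : A c j4
    · rfl
    · exact absurd h hc4
  have hj12 : j1 ≠ j2 := fun h => h12 (h ▸ rfl)
  have hj34 : j3 ≠ j4 := fun h => h34 (h ▸ rfl)
  have hj13 : j1 ≠ j3 := fun h => by rw [h, hc3'] at hc1; exact Bool.noConfusion hc1
  have hj14 : j1 ≠ j4 := fun h => by rw [h, hc4'] at hc1; exact Bool.noConfusion hc1
  have hj23 : j2 ≠ j3 := fun h => by rw [h, hc3'] at hc2; exact Bool.noConfusion hc2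
  have hj24 : j2 ≠ j4 := fun h => by rw [h, hc4'] at hc2; exact Bool.noConfusion hc2
  apply hav
  refine ⟨⟨![a, b, c], inj3 hab hac hbc⟩,
    ⟨![j1, j2, j3, j4], inj4 hj12 hj13 hj14 hj23 hj24 hj34⟩, ?_⟩
  intro i j
  fin_cases i <;> fin_cases j <;> simp_all [twoCfg, Matrix.vecHead, Matrix.vecTail]

/-- If a simple `m`-rowed matrix `A` avoids `2·[1₃ 1₂0₁]` and has at least
`forb(m, 1₄) − 1 = C(m,3)+C(m,2)+C(m,1)+C(m,0) − 1` columns, then every column of `A`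
has at most 3 ones, i.e. `A` is a configuration in `[K_m³ K_m² K_m¹ K_m⁰]`. -/
theorem stmt15 (m n : ℕ) (A : Fin m → Fin n → Bool) (hS : Simple A)
    (hav : ¬ IsConfig twoCfg A)
    (hn : m.choose 3 + m.choose 2 + m.choose 1 + m.choose 0 - 1 ≤ n) :
    ∀ j, (Finset.univ.filter fun i => A i j = true).card ≤ 3 := by
  classical
  intro j
  by_contra hcard
  push_neg at hcard
  set T := (univ : Finset (Fin n)).image
    (fun j => univ.filter (fun i => A i j = true)) with hT
  have hAvoid : AvoidCfg T := avoid_of_matrix A hav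
  have hbig : ∃ S ∈ T, 4 ≤ S.card :=
    ⟨_, mem_image_of_mem _ (mem_univ j), by omega⟩
  have hkey := key_bound m (univ : Finset (Fin m)) T (by simp)
    (fun S _ => subset_univ S) hAvoid hbig
  have hinj : Function.Injective
      (fun j => (univ : Finset (Fin m)).filter (fun i => A i j = true)) := by
    intro j1 j2 h
    apply hS
    funext i
    have h0 : (univ : Finset (Fin m)).filter (fun i => A i j1 = true) =
        (univ : Finset (Fin m)).filter (fun i => A i j2 = true) := h
    have h1 : i ∈ (univ : Finset (Fin m)).filter (fun i => A i j1 = true) ↔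
        i ∈ (univ : Finset (Fin m)).filter (fun i => A i j2 = true) := by rw [h0]
    simp only [mem_filter, mem_univ, true_and] at h1
    cases hb1 : A i j1 <;> cases hb2 : A i j2 <;> simp_all
  have hTn : T.card = n := by
    rw [hT, card_image_of_injective _ hinj, card_fin]
  have e1 : m.choose 1 = m := Nat.choose_one_right m
  have e0 : m.choose 0 = 1 := Nat.choose_zero_right m
  omega
end

section
/- ext(m, 2·[1_3 1_2 0_1]) = ext(m, 1_4): every extremal simple m-rowed matrix avoiding the 3×4 configuration with columns (1,1,1),(1,1,1),(1,1,0),(1,1,0) equals [K_m^3 K_m^2 K_m^1 K_m^0], the matrix of all columns with at most three 1's, and its number of columns is C(m,3)+C(m,2)+C(m,1)+C(m,0). -/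
/-!
Read a simple matrix as the family `F` of its column supports and induct on the rows. Splitting
along a row `x` into `F₀` (sets avoiding `x`) and `F₁` (sets containing `x`, with `x` removed)
gives `#F = #(F₀ ∪ F₁) + #(F₀ ∩ F₁)`. The union still avoids `2·[1₃ 1₂0₁]`, and two members of
`F₀ ∩ F₁` sharing two rows `a, b` would, with their extensions by `x`, form the configuration on
rows `a, b, x`. So `F₀ ∩ F₁` is a linear family and has at most `C(m,2) + C(m,1) + C(m,0)`
members (map each set to one of its pairs), and Pascal's rule closes the induction.
For an extremal `F` both bounds are attained: `F₀ ∪ F₁` is every set of size `≤ 3` and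
`F₀ ∩ F₁` every set of size `≤ 2`. Then `F₁` contains no `{a, b, t}`, since `{x, a}, {x, a, t}`
and `{x, a, b}, {x, a, b, t}` form the configuration on rows `a, x, b`; hence `F` is every set
of size `≤ 3`.
-/

open Finset

namespace Finset

section powersetCardLE

variable {α : Type*}

def powersetCardLE (k : ℕ) (s : Finset α) : Finset (Finset α) := {t ∈ s.powerset | #t ≤ k}

@[simp] lemma mem_powersetCardLE {k : ℕ} {s t : Finset α} :
    t ∈ powersetCardLE k s ↔ t ⊆ s ∧ #t ≤ k := by
  simp [powersetCardLE]

lemma card_powersetCardLE (k : ℕ) (s : Finset α) :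
    #(powersetCardLE k s) = ∑ i ∈ range (k + 1), (#s).choose i := by
  rw [card_eq_sum_card_fiberwise (f := card) (t := range (k + 1))
    (fun t ht => by simpa [Nat.lt_succ_iff] using (mem_powersetCardLE.1 ht).2)]
  refine sum_congr rfl fun i hi => ?_
  rw [← card_powersetCard, powersetCard_eq_filter, powersetCardLE, filter_filter]
  congr 1
  refine filter_congr fun t _ => ⟨And.right, fun h => ⟨?_, h⟩⟩
  rw [mem_range] at hi
  omega

lemma fintypeCard_subtype_card_le [Fintype α] (k : ℕ) :
    Fintype.card {t : Finset α // #t ≤ k} = #(powersetCardLE k (univ : Finset α)) := by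
  rw [Fintype.card_subtype, powersetCardLE, powerset_univ]

variable [DecidableEq α] {x : α} {s : Finset α}

lemma memberSubfamily_powersetCardLE (hx : x ∉ s) (k : ℕ) :
    (powersetCardLE (k + 1) (insert x s)).memberSubfamily x = powersetCardLE k s := by
  ext t
  simp only [mem_memberSubfamily, mem_powersetCardLE]
  constructor
  · rintro ⟨⟨hts, htk⟩, hxt⟩
    exact ⟨(insert_subset_insert_iff hxt).1 hts, by rw [card_insert_of_notMem hxt] at htk; omega⟩
  · rintro ⟨hts, htk⟩
    have hxt : x ∉ t := fun h => hx (hts h)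
    exact ⟨⟨insert_subset_insert x hts, by rw [card_insert_of_notMem hxt]; omega⟩, hxt⟩

lemma nonMemberSubfamily_powersetCardLE (hx : x ∉ s) (k : ℕ) :
    (powersetCardLE k (insert x s)).nonMemberSubfamily x = powersetCardLE k s := by
  ext t
  simp only [mem_nonMemberSubfamily, mem_powersetCardLE]
  constructor
  · rintro ⟨⟨hts, htk⟩, hxt⟩
    exact ⟨(subset_insert_iff_of_notMem hxt).1 hts, htk⟩
  · rintro ⟨hts, htk⟩
    exact ⟨⟨hts.trans (subset_insert x s), htk⟩, fun h => hx (hts h)⟩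

lemma card_powersetCardLE_succ_insert (hx : x ∉ s) (k : ℕ) :
    #(powersetCardLE (k + 1) (insert x s)) =
      #(powersetCardLE (k + 1) s) + #(powersetCardLE k s) := by
  rw [← card_memberSubfamily_add_card_nonMemberSubfamily x, memberSubfamily_powersetCardLE hx,
    nonMemberSubfamily_powersetCardLE hx, add_comm]

end powersetCardLE

section subfamily

variable {α : Type*} [DecidableEq α] {a : α} {s : Finset α} {𝒜 ℬ : Finset (Finset α)}

lemma eq_of_memberSubfamily_eq_of_nonMemberSubfamily_eq
    (h₁ : 𝒜.memberSubfamily a = ℬ.memberSubfamily a)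
    (h₀ : 𝒜.nonMemberSubfamily a = ℬ.nonMemberSubfamily a) : 𝒜 = ℬ := by
  ext t
  by_cases ha : a ∈ t
  · simpa [insert_erase ha] using congrArg (t.erase a ∈ ·) h₁
  · simpa [ha] using congrArg (t ∈ ·) h₀

lemma card_eq_card_union_add_card_inter_subfamily (a : α) (𝒜 : Finset (Finset α)) :
    #𝒜 = #(𝒜.nonMemberSubfamily a ∪ 𝒜.memberSubfamily a) +
      #(𝒜.nonMemberSubfamily a ∩ 𝒜.memberSubfamily a) := by
  rw [card_union_add_card_inter, ← card_memberSubfamily_add_card_nonMemberSubfamily a, add_comm]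

lemma memberSubfamily_subset_powerset (h : 𝒜 ⊆ (insert a s).powerset) :
    𝒜.memberSubfamily a ⊆ s.powerset := by
  intro t ht
  rw [mem_memberSubfamily] at ht
  rw [mem_powerset, ← subset_insert_iff_of_notMem ht.2]
  exact (subset_insert a t).trans (mem_powerset.1 (h ht.1))

lemma nonMemberSubfamily_subset_powerset (h : 𝒜 ⊆ (insert a s).powerset) :
    𝒜.nonMemberSubfamily a ⊆ s.powerset := by
  intro t ht
  rw [mem_nonMemberSubfamily] at ht
  rw [mem_powerset, ← subset_insert_iff_of_notMem ht.2]
  exact mem_powerset.1 (h ht.1)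

end subfamily

end Finset

section SetFamily

variable {α : Type*} [DecidableEq α]

lemma injOn_of_subset_of_card_eq_min_two {ℬ : Finset (Finset α)} {φ : Finset α → Finset α}
    (hφS : ∀ S, φ S ⊆ S) (hφcard : ∀ S, #(φ S) = min #S 2)
    (hℬ : ∀ S ∈ ℬ, ∀ T ∈ ℬ, 2 ≤ #(S ∩ T) → S = T) : Set.InjOn φ ℬ := by
  have φ_eq_self : ∀ S : Finset α, #S ≤ 1 → φ S = S := fun S hS =>
    eq_of_subset_of_card_le (hφS S) (by rw [hφcard]; omega)
  intro S hS T hT hST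
  by_cases h2 : 2 ≤ #(φ S)
  · exact hℬ S hS T hT (h2.trans (card_le_card (subset_inter (hφS S) (hST ▸ hφS T))))
  · have hS : #S ≤ 1 := by have := hφcard S; omega
    have hT : #T ≤ 1 := by have := hφcard T; rw [← hST] at this; omega
    rwa [φ_eq_self S hS, φ_eq_self T hT] at hST

lemma card_le_and_eq_of_two_le_card_inter {s : Finset α} {ℬ : Finset (Finset α)}
    (hℬs : ℬ ⊆ s.powerset) (hℬ : ∀ S ∈ ℬ, ∀ T ∈ ℬ, 2 ≤ #(S ∩ T) → S = T) :
    #ℬ ≤ #(powersetCardLE 2 s) ∧ (#ℬ = #(powersetCardLE 2 s) → ℬ = powersetCardLE 2 s) := by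
  -- `φ S` is `S` itself when `#S ≤ 2`, and a pair inside `S` otherwise
  have : ∀ S : Finset α, ∃ t ⊆ S, #t = min #S 2 := fun S =>
    exists_subset_card_eq (min_le_left _ _)
  choose φ hφS hφcard using this
  have hφs : ∀ S ∈ ℬ, φ S ⊆ s := fun S hS => (hφS S).trans (mem_powerset.1 (hℬs hS))
  have himage : ℬ.image φ ⊆ powersetCardLE 2 s := image_subset_iff.2 fun S hS =>
    mem_powersetCardLE.2 ⟨hφs S hS, (hφcard S).trans_le (min_le_right _ _)⟩
  have hcard : #(ℬ.image φ) = #ℬ :=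
    card_image_of_injOn (injOn_of_subset_of_card_eq_min_two hφS hφcard hℬ)
  refine ⟨hcard ▸ card_le_card himage, fun h => ?_⟩
  have himage_eq : ℬ.image φ = powersetCardLE 2 s := eq_of_subset_of_card_le himage (by omega)
  have card_le_two : ∀ S ∈ ℬ, #S ≤ 2 := by
    intro S hS
    by_contra! hS2
    have hφS2 : #(φ S) = 2 := by rw [hφcard, min_eq_right hS2.le]
    obtain ⟨y, hyS, hyφ⟩ := exists_mem_notMem_of_card_lt_card (hφS2.trans_lt hS2)
    obtain ⟨a, haφ⟩ := card_pos.1 (by omega : 0 < #(φ S))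
    have hay : {a, y} ⊆ S := insert_subset (hφS S haφ) (singleton_subset_iff.2 hyS)
    obtain ⟨T, hT, hφT⟩ := mem_image.1 <| himage_eq ▸
      mem_powersetCardLE.2 ⟨hay.trans (mem_powerset.1 (hℬs hS)), card_le_two⟩
    have hST : S = T := hℬ S hS T hT <|
      (card_pair_eq_two_iff.2 (ne_of_mem_of_not_mem haφ hyφ)).symm.le.trans <|
        card_le_card (subset_inter hay (hφT ▸ hφS T))
    subst hST
    exact hyφ (hφT ▸ mem_insert_of_mem (mem_singleton_self y))
  exact eq_of_subset_of_card_le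
    (fun S hS => mem_powersetCardLE.2 ⟨mem_powerset.1 (hℬs hS), card_le_two S hS⟩) h.ge

-- `F` as the column supports of a simple matrix: no copy of `twoCfg` on rows `a, b, c` and
-- columns `S₁, S₂, S₃, S₄`
def TwoCfgFree (F : Finset (Finset α)) : Prop :=
  ∀ ⦃a b c : α⦄ ⦃S₁ S₂ S₃ S₄ : Finset α⦄, a ≠ b → S₁ ≠ S₂ → S₃ ≠ S₄ →
    S₁ ∈ F → S₂ ∈ F → S₃ ∈ F → S₄ ∈ F →
    {a, b, c} ⊆ S₁ → {a, b, c} ⊆ S₂ → {a, b} ⊆ S₃ → {a, b} ⊆ S₄ → c ∉ S₃ → c ∉ S₄ → False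

namespace TwoCfgFree

variable {F : Finset (Finset α)} {x : α}

lemma of_erase_eq (hF : TwoCfgFree F) {G : Finset (Finset α)} (g : Finset α → Finset α)
    (hgF : ∀ S ∈ G, g S ∈ F) (hg : ∀ S ∈ G, (g S).erase x = S) : TwoCfgFree G := by
  have hx : ∀ S ∈ G, x ∉ S := fun S hS => hg S hS ▸ notMem_erase x _
  have hmem : ∀ S ∈ G, ∀ y, y ≠ x → (y ∈ g S ↔ y ∈ S) := fun S hS y hy => by
    conv_rhs => rw [← hg S hS, mem_erase]
    exact (and_iff_right hy).symm
  have hsub : ∀ S ∈ G, ∀ t : Finset α, t ⊆ S → (t ⊆ g S ↔ t ⊆ S) := fun S hS t htS =>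
    ⟨fun _ => htS, fun h y hy => (hmem S hS y (fun hyx => hx S hS (hyx ▸ htS hy))).2 (h hy)⟩
  intro a b c S₁ S₂ S₃ S₄ hab h₁₂ h₃₄ h₁ h₂ h₃ h₄ habc₁ habc₂ hab₃ hab₄ hc₃ hc₄
  have hcx : c ≠ x := fun hcx => hx _ h₁ (hcx ▸ habc₁ (by simp))
  have hinj : Set.InjOn g G := fun S hS T hT hST => by rw [← hg S hS, hST, hg T hT]
  exact hF hab (fun h => h₁₂ (hinj h₁ h₂ h)) (fun h => h₃₄ (hinj h₃ h₄ h))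
    (hgF _ h₁) (hgF _ h₂) (hgF _ h₃) (hgF _ h₄)
    ((hsub _ h₁ _ habc₁).2 habc₁) ((hsub _ h₂ _ habc₂).2 habc₂)
    ((hsub _ h₃ _ hab₃).2 hab₃) ((hsub _ h₄ _ hab₄).2 hab₄)
    (fun h => hc₃ ((hmem _ h₃ c hcx).1 h)) (fun h => hc₄ ((hmem _ h₄ c hcx).1 h))

lemma nonMemberSubfamily_union_memberSubfamily (hF : TwoCfgFree F) :
    TwoCfgFree (F.nonMemberSubfamily x ∪ F.memberSubfamily x) := by
  refine hF.of_erase_eq (x := x) (fun S => if S ∈ F then S else insert x S) ?_ ?_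
  all_goals
    intro S hS
    simp only [mem_union, mem_nonMemberSubfamily, mem_memberSubfamily] at hS
    split_ifs with h
  · exact h
  · exact hS.resolve_left (fun h' => h h'.1) |>.1
  · exact erase_eq_of_notMem (hS.elim And.right And.right)
  · exact erase_insert (hS.elim And.right And.right)

lemma eq_of_two_le_card_inter (hF : TwoCfgFree F) {S T : Finset α}
    (hS : S ∈ F.nonMemberSubfamily x ∩ F.memberSubfamily x)
    (hT : T ∈ F.nonMemberSubfamily x ∩ F.memberSubfamily x) (h : 2 ≤ #(S ∩ T)) : S = T := by
  simp only [mem_inter, mem_nonMemberSubfamily, mem_memberSubfamily] at hS hT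
  obtain ⟨a, ha, b, hb, hab⟩ := one_lt_card.1 h
  rw [mem_inter] at ha hb
  by_contra hST
  refine hF (c := x) hab (fun h => hST ?_) hST hS.2.1 hT.2.1 hS.1.1 hT.1.1 ?_ ?_ ?_ ?_ hS.1.2 hT.1.2
  · rw [← erase_insert hS.2.2, h, erase_insert hT.2.2]
  all_goals grind

lemma card_le_two_of_insert_mem (hF : TwoCfgFree F) {S : Finset α} (hxS : x ∉ S)
    (hS : insert x S ∈ F) (hsmall : ∀ T ⊆ S, #T ≤ 2 → insert x T ∈ F) : #S ≤ 2 := by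
  by_contra! h3
  obtain ⟨a, haS, b, hbS, t, htS, hab, hat, hbt⟩ := two_lt_card.1 h3
  have hx : x ≠ a ∧ x ≠ b ∧ x ≠ t := by refine ⟨?_, ?_, ?_⟩ <;> rintro rfl <;> contradiction
  have h₁₂ : insert x {a, b} ≠ insert x S := fun h => by
    have ht : t ∈ insert x {a, b} := h ▸ mem_insert_of_mem htS
    simp [hx.2.2.symm, hat.symm, hbt.symm] at ht
  have h₃₄ : insert x {a} ≠ insert x {a, t} := fun h => by
    have ht : t ∈ (insert x {a, t} : Finset α) := by simp
    rw [← h] at ht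
    simp [hx.2.2.symm, hat.symm] at ht
  refine hF (a := a) (b := x) (c := b) hx.1.symm h₁₂ h₃₄ (hsmall {a, b} ?_ card_le_two) hS
    (hsmall {a} ?_ (by simp)) (hsmall {a, t} ?_ card_le_two) ?_ ?_ ?_ ?_ ?_ ?_
  all_goals grind

lemma eq_powersetCardLE_insert (hF : TwoCfgFree F) {s : Finset α} (hx : x ∉ s)
    (hU : F.nonMemberSubfamily x ∪ F.memberSubfamily x = powersetCardLE 3 s)
    (hB : F.nonMemberSubfamily x ∩ F.memberSubfamily x = powersetCardLE 2 s) :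
    F = powersetCardLE 3 (insert x s) := by
  have hF₁ : F.memberSubfamily x ⊆ powersetCardLE 2 s := by
    intro S hS
    have hSs := (mem_powersetCardLE.1 (hU ▸ mem_union_right _ hS)).1
    rw [mem_memberSubfamily] at hS
    refine mem_powersetCardLE.2 ⟨hSs, hF.card_le_two_of_insert_mem hS.2 hS.1 fun T hTS hT => ?_⟩
    have hT : T ∈ F.nonMemberSubfamily x ∩ F.memberSubfamily x :=
      hB ▸ mem_powersetCardLE.2 ⟨hTS.trans hSs, hT⟩
    exact (mem_memberSubfamily.1 (mem_inter.1 hT).2).1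
  have h₁ : F.memberSubfamily x = powersetCardLE 2 s := hF₁.antisymm (hB ▸ inter_subset_right)
  have h₀ : F.nonMemberSubfamily x = powersetCardLE 3 s := by
    rw [← hU, union_eq_left.2 (h₁ ▸ hB ▸ inter_subset_left)]
  refine eq_of_memberSubfamily_eq_of_nonMemberSubfamily_eq (a := x) ?_ ?_
  · rw [memberSubfamily_powersetCardLE hx, h₁]
  · rw [nonMemberSubfamily_powersetCardLE hx, h₀]

lemma card_le_and_eq_of_subset_powerset (hF : TwoCfgFree F) {s : Finset α}
    (hFs : F ⊆ s.powerset) :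
    #F ≤ #(powersetCardLE 3 s) ∧ (#F = #(powersetCardLE 3 s) → F = powersetCardLE 3 s) := by
  induction s using Finset.induction_on generalizing F with
  | empty =>
    have hF₃ : F ⊆ powersetCardLE 3 ∅ := fun S hS => by
      simp [subset_empty.1 (mem_powerset.1 (hFs hS))]
    exact ⟨card_le_card hF₃, fun h => eq_of_subset_of_card_le hF₃ h.ge⟩
  | insert x s hx ih =>
    obtain ⟨hU, hU_eq⟩ := ih hF.nonMemberSubfamily_union_memberSubfamily
      (union_subset (nonMemberSubfamily_subset_powerset hFs) (memberSubfamily_subset_powerset hFs))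
    obtain ⟨hB, hB_eq⟩ := card_le_and_eq_of_two_le_card_inter
      (inter_subset_left.trans (nonMemberSubfamily_subset_powerset hFs))
      (fun S hS T hT => hF.eq_of_two_le_card_inter hS hT)
    have hF_card := card_eq_card_union_add_card_inter_subfamily x F
    have h_card : #(powersetCardLE 3 (insert x s)) =
        #(powersetCardLE 3 s) + #(powersetCardLE 2 s) := card_powersetCardLE_succ_insert hx 2
    refine ⟨by omega, fun h => hF.eq_powersetCardLE_insert hx (hU_eq ?_) (hB_eq ?_)⟩ <;> omega

end TwoCfgFree

lemma twoCfgFree_powersetCardLE_three (s : Finset α) : TwoCfgFree (powersetCardLE 3 s) := by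
  intro a b c S₁ S₂ S₃ S₄ hab h₁₂ _ h₁ h₂ _ _ habc₁ habc₂ hab₃ _ hc₃ _
  have hc : a ≠ c ∧ b ≠ c := by
    constructor <;> rintro rfl <;> exact hc₃ (hab₃ (by simp))
  have habc : #{a, b, c} = 3 := card_eq_three.2 ⟨a, b, c, hab, hc.1, hc.2, rfl⟩
  have eq_abc : ∀ S ∈ powersetCardLE 3 s, {a, b, c} ⊆ S → S = {a, b, c} := fun S hS h =>
    (eq_of_subset_of_card_le h (habc ▸ (mem_powersetCardLE.1 hS).2)).symm
  exact h₁₂ ((eq_abc _ h₁ habc₁).trans (eq_abc _ h₂ habc₂).symm)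

end SetFamily

section Matrix

variable {α β : Type*} [Fintype α]

def colSet (A : α → β → Bool) (j : β) : Finset α := {i | A i j}

@[simp] lemma mem_colSet {A : α → β → Bool} {i : α} {j : β} : i ∈ colSet A j ↔ A i j = true := by
  simp [colSet]

lemma simple_iff_injective_colSet {A : α → β → Bool} :
    Simple A ↔ Function.Injective (colSet A) := by
  refine forall₂_congr fun j₁ j₂ => imp_congr_left ?_
  simp [Finset.ext_iff, funext_iff]

variable [DecidableEq α]

lemma colSet_decide_mem (f : β → Finset α) : colSet (fun i j => decide (i ∈ f j)) = f := by
  ext j i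
  simp

lemma simple_decide_mem {f : β → Finset α} (hf : Function.Injective f) :
    Simple fun i j => decide (i ∈ f j) := by
  rwa [simple_iff_injective_colSet, colSet_decide_mem]

variable [Fintype β]

lemma isConfig_twoCfg_iff {A : α → β → Bool} (hA : Simple A) :
    IsConfig twoCfg A ↔ ¬ TwoCfgFree (univ.image (colSet A)) := by
  constructor
  · rintro ⟨r, c, h⟩ hF
    have hmem : ∀ i j, r i ∈ colSet A (c j) ↔ twoCfg i j = true := fun i j => by
      rw [mem_colSet, h]
    have hcol : ∀ j, colSet A (c j) ∈ univ.image (colSet A) := fun j =>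
      mem_image_of_mem _ (mem_univ _)
    refine hF (a := r 0) (b := r 1) (c := r 2) (r.injective.ne (by decide))
      ((simple_iff_injective_colSet.1 hA).ne (c.injective.ne (by decide : (0 : Fin 4) ≠ 1)))
      ((simple_iff_injective_colSet.1 hA).ne (c.injective.ne (by decide : (2 : Fin 4) ≠ 3)))
      (hcol 0) (hcol 1) (hcol 2) (hcol 3) ?_ ?_ ?_ ?_ ?_ ?_ <;>
    simp [insert_subset_iff, hmem, twoCfg]
  · intro hnot
    by_contra hcfg
    refine hnot fun a b c S₁ S₂ S₃ S₄ hab h₁₂ h₃₄ h₁ h₂ h₃ h₄ habc₁ habc₂ hab₃ hab₄ hc₃ hc₄ =>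
      hcfg ?_
    obtain ⟨j₁, -, rfl⟩ := mem_image.1 h₁
    obtain ⟨j₂, -, rfl⟩ := mem_image.1 h₂
    obtain ⟨j₃, -, rfl⟩ := mem_image.1 h₃
    obtain ⟨j₄, -, rfl⟩ := mem_image.1 h₄
    simp only [insert_subset_iff, singleton_subset_iff, mem_colSet] at habc₁ habc₂ hab₃ hab₄ hc₃ hc₄
    have hac : a ≠ c := by rintro rfl; exact hc₃ hab₃.1
    have hbc : b ≠ c := by rintro rfl; exact hc₃ hab₃.2
    have hj : j₁ ≠ j₂ ∧ j₃ ≠ j₄ := ⟨fun h => h₁₂ (h ▸ rfl), fun h => h₃₄ (h ▸ rfl)⟩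
    refine ⟨⟨![a, b, c], ?_⟩, ⟨![j₁, j₂, j₃, j₄], ?_⟩, ?_⟩
    · intro i i' h
      fin_cases i <;> fin_cases i' <;> simp_all
    · intro j j' h
      fin_cases j <;> fin_cases j' <;> simp_all
    · intro i j
      change twoCfg i j = A (![a, b, c] i) (![j₁, j₂, j₃, j₄] j)
      fin_cases i <;> fin_cases j <;> simp [twoCfg, *]

lemma not_isConfig_twoCfg_decide_mem (e : β ≃ {S : Finset α // #S ≤ 3}) :
    ¬ IsConfig twoCfg fun i j => decide (i ∈ (e j).1) := by
  have hA : Simple fun i j => decide (i ∈ (e j).1) :=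
    simple_decide_mem (Subtype.val_injective.comp e.injective)
  rw [isConfig_twoCfg_iff hA, not_not, colSet_decide_mem fun j => (e j).1]
  convert twoCfgFree_powersetCardLE_three (univ : Finset α)
  ext S
  simp only [mem_image, mem_univ, true_and, mem_powersetCardLE, subset_univ]
  exact ⟨by rintro ⟨j, rfl⟩; exact (e j).2, fun hS => ⟨e.symm ⟨S, hS⟩, by simp⟩⟩

lemma card_le_and_exists_equiv_of_not_isConfig_twoCfg {A : α → β → Bool} (hA : Simple A)
    (h : ¬ IsConfig twoCfg A) :
    Fintype.card β ≤ Fintype.card {S : Finset α // #S ≤ 3} ∧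
      (Fintype.card β = Fintype.card {S : Finset α // #S ≤ 3} →
        ∃ f : β ≃ {S : Finset α // #S ≤ 3}, ∀ j, (f j).1 = colSet A j) := by
  rw [isConfig_twoCfg_iff hA, not_not] at h
  have hcard : #(univ.image (colSet A)) = Fintype.card β :=
    card_image_of_injective _ (simple_iff_injective_colSet.1 hA)
  obtain ⟨hle, heq⟩ := h.card_le_and_eq_of_subset_powerset
    (fun S _ => mem_powerset.2 (subset_univ S))
  rw [hcard] at hle heq
  rw [fintypeCard_subtype_card_le]
  refine ⟨hle, fun hβ => ?_⟩
  have hsmall : ∀ j, #(colSet A j) ≤ 3 := fun j =>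
    (mem_powersetCardLE.1 (heq hβ ▸ mem_image_of_mem _ (mem_univ j))).2
  refine ⟨Equiv.ofBijective (fun j => ⟨colSet A j, hsmall j⟩) ?_, fun j => rfl⟩
  rw [Fintype.bijective_iff_injective_and_card, fintypeCard_subtype_card_le]
  exact ⟨fun j₁ j₂ h => simple_iff_injective_colSet.1 hA (congrArg Subtype.val h), hβ⟩

end Matrix

lemma card_subtype_finset_card_le_three (α : Type*) [Fintype α] :
    Fintype.card {S : Finset α // #S ≤ 3} = (Fintype.card α).choose 3 +
      (Fintype.card α).choose 2 + (Fintype.card α).choose 1 + (Fintype.card α).choose 0 := by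
  rw [fintypeCard_subtype_card_le, card_powersetCardLE, card_univ]
  simp only [sum_range_succ, sum_range_zero]
  ring

/-- `ext(m, 2·[1₃ 1₂0₁]) = ext(m, 1₄)`: the maximum number of columns of a simple
`m`-rowed matrix avoiding `2·[1₃ 1₂0₁]` is `C(m,3)+C(m,2)+C(m,1)+C(m,0)`, and every
extremal such matrix is (as a set of columns) `[K_m³ K_m² K_m¹ K_m⁰]`, the matrix
whose columns are exactly all columns with at most three 1's. -/
theorem stmt16 (m : ℕ) :
    IsGreatest {n : ℕ | ∃ A : Fin m → Fin n → Bool, Simple A ∧ ¬ IsConfig twoCfg A}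
      (m.choose 3 + m.choose 2 + m.choose 1 + m.choose 0) ∧
    ∀ (n : ℕ) (A : Fin m → Fin n → Bool), Simple A → ¬ IsConfig twoCfg A →
      n = m.choose 3 + m.choose 2 + m.choose 1 + m.choose 0 →
      ∃ f : Fin n ≃ {S : Finset (Fin m) // S.card ≤ 3},
        ∀ i j, A i j = decide (i ∈ (f j).1) := by
  have hN := card_subtype_finset_card_le_three (Fin m)
  rw [Fintype.card_fin] at hN
  rw [← hN]
  refine ⟨⟨?_, ?_⟩, ?_⟩
  · let e := (Fintype.equivFin {S : Finset (Fin m) // #S ≤ 3}).symm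
    exact ⟨_, simple_decide_mem (Subtype.val_injective.comp e.injective),
      not_isConfig_twoCfg_decide_mem e⟩
  · rintro n ⟨A, hA, hcfg⟩
    simpa using (card_le_and_exists_equiv_of_not_isConfig_twoCfg hA hcfg).1
  · intro n A hA hcfg hn
    obtain ⟨f, hf⟩ := (card_le_and_exists_equiv_of_not_isConfig_twoCfg hA hcfg).2 (by simpa)
    exact ⟨f, fun i j => by simp [hf]⟩
end

section
/- Let A be a simple m-rowed matrix avoiding F(0,1,3,0) = [1 0 0 0; 0 1 1 1], and suppose three rows i,j,k satisfy: at most two [0;1] and at most two [1;0] submatrices occur in rows (i,j), at most two of each in rows (j,k), and no [0;1] in rows (i,k). Then at most 4 columns of A are non-constant on rows {i,j,k}, and deleting rows i,j together with those at most 4 columns yields a simple (m−2)-rowed matrix avoiding F(0,1,3,0). -/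
/-- `F(0,1,3,0)`: the 2×4 matrix with rows (1,0,0,0) and (0,1,1,1). -/
def F0130 : Fin 2 → Fin 4 → Bool :=
  ![![true, false, false, false], ![false, true, true, true]]

/-- Suppose `A` is a simple `m`-rowed matrix avoiding `F(0,1,3,0)` and three distinct
rows `i, j, k` satisfy: at most two `[0;1]` and at most two `[1;0]` column patterns on
rows `(i,j)`, at most two of each on rows `(j,k)`, and no `[0;1]` on rows `(i,k)`.
Then at most 4 columns of `A` are non-constant on rows `{i,j,k}`, and deleting rows
`i, j` together with those columns yields a simple `(m−2)`-rowed matrix avoiding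
`F(0,1,3,0)`. -/
theorem stmt18 (m n : ℕ) (A : Fin m → Fin n → Bool) (hS : Simple A)
    (hav : ¬ IsConfig F0130 A)
    (i j k : Fin m) (hij : i ≠ j) (hjk : j ≠ k) (hki : k ≠ i)
    (hij01 : (Finset.univ.filter fun c => A i c = false ∧ A j c = true).card ≤ 2)
    (hij10 : (Finset.univ.filter fun c => A i c = true ∧ A j c = false).card ≤ 2)
    (hjk01 : (Finset.univ.filter fun c => A j c = false ∧ A k c = true).card ≤ 2)
    (hjk10 : (Finset.univ.filter fun c => A j c = true ∧ A k c = false).card ≤ 2)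
    (hik : ∀ c, ¬ (A i c = false ∧ A k c = true)) :
    (Finset.univ.filter fun c => ¬ (A i c = A j c ∧ A j c = A k c)).card ≤ 4 ∧
    ∃ (r : Fin (m - 2) ↪ Fin m)
      (c : Fin (n - (Finset.univ.filter fun c => ¬ (A i c = A j c ∧ A j c = A k c)).card)
          ↪ Fin n),
      (∀ x, r x ≠ i ∧ r x ≠ j) ∧
      (∀ y, c y ∉ Finset.univ.filter fun c => ¬ (A i c = A j c ∧ A j c = A k c)) ∧
      Simple (fun x y => A (r x) (c y)) ∧
      ¬ IsConfig F0130 (fun x y => A (r x) (c y)) := by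
  classical
  set B := (Finset.univ.filter fun c => ¬ (A i c = A j c ∧ A j c = A k c)) with hB
  have hsub : B ⊆ (Finset.univ.filter fun c => A i c = true ∧ A j c = false) ∪
      (Finset.univ.filter fun c => A j c = true ∧ A k c = false) := by
    intro c hc
    simp only [hB, Finset.mem_filter, Finset.mem_union, Finset.mem_univ, true_and] at *
    have hik' := hik c
    rcases Bool.eq_false_or_eq_true (A i c) with h1 | h1 <;>
      rcases Bool.eq_false_or_eq_true (A j c) with h2 | h2 <;>
        rcases Bool.eq_false_or_eq_true (A k c) with h3 | h3 <;> simp_all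
  have hcard : B.card ≤ 4 :=
    le_trans (Finset.card_le_card hsub)
      (le_trans (Finset.card_union_le _ _) (by omega))
  refine ⟨hcard, ?_⟩
  -- rows
  set s : Finset (Fin m) := ({i, j} : Finset (Fin m))ᶜ with hs
  have hscard : s.card = m - 2 := by
    rw [hs, Finset.card_compl, Finset.card_insert_of_notMem (by simpa using hij),
      Finset.card_singleton, Fintype.card_fin]
  set r : Fin (m - 2) ↪ Fin m := (s.orderEmbOfFin hscard).toEmbedding with hr
  have hrmem : ∀ x, r x ∈ s := fun x => Finset.orderEmbOfFin_mem s hscard x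
  have hrange : ∀ a : Fin m, a ∈ s → ∃ x, r x = a := by
    intro a ha
    have := (Finset.range_orderEmbOfFin s hscard)
    have : a ∈ Set.range (s.orderEmbOfFin hscard) := by rw [this]; exact ha
    obtain ⟨x, hx⟩ := this
    exact ⟨x, hx⟩
  -- columns
  have hccard : Bᶜ.card = n - B.card := by
    rw [Finset.card_compl, Fintype.card_fin]
  set c : Fin (n - B.card) ↪ Fin n := (Bᶜ.orderEmbOfFin hccard).toEmbedding with hc
  have hcmem : ∀ y, c y ∈ Bᶜ := fun y => Finset.orderEmbOfFin_mem Bᶜ hccard y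
  refine ⟨r, c, ?_, ?_, ?_, ?_⟩
  · intro x
    have := hrmem x
    rw [hs, Finset.mem_compl, Finset.mem_insert, Finset.mem_singleton] at this
    push_neg at this
    exact this
  · intro y
    have := hcmem y
    rwa [Finset.mem_compl] at this
  · -- Simple
    intro y1 y2 h
    have hconst : ∀ y, A i (c y) = A j (c y) ∧ A j (c y) = A k (c y) := by
      intro y
      have hm := hcmem y
      rw [Finset.mem_compl] at hm
      by_contra hcon
      exact hm (Finset.mem_filter.mpr ⟨Finset.mem_univ _, hcon⟩)
    have hk : ∃ x, r x = k := hrange k (by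
      rw [hs, Finset.mem_compl, Finset.mem_insert, Finset.mem_singleton]
      push_neg
      exact ⟨hki, fun h => hjk h.symm⟩)
    obtain ⟨xk, hxk⟩ := hk
    have hall : ∀ a : Fin m, A a (c y1) = A a (c y2) := by
      intro a
      by_cases ha : a ∈ s
      · obtain ⟨x, hx⟩ := hrange a ha
        have := congrFun h x
        simpa [hx] using this
      · have hk12 : A k (c y1) = A k (c y2) := by
          have := congrFun h xk
          simpa [hxk] using this
        rw [hs, Finset.mem_compl, not_not, Finset.mem_insert, Finset.mem_singleton] at ha
        rcases ha with ha | ha <;> subst ha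
        · rw [(hconst y1).1, (hconst y1).2, (hconst y2).1, (hconst y2).2, hk12]
        · rw [(hconst y1).2, (hconst y2).2, hk12]
    have : c y1 = c y2 := hS (funext hall)
    exact c.injective this
  · -- avoids F0130
    rintro ⟨r', c', hF⟩
    exact hav ⟨r'.trans r, c'.trans c, fun a b => hF a b⟩
end
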